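/- Let $n \ge 2$ and $\eta \in \mathbb{Z}_2^n$ with $|\eta| \equiv 3 \pmod 4$. Let $A$ be the adjacency matrix of the augmented hypercube $Q_n^\eta$ and let $\psi_t = \exp(-itA)\delta_{0_n}$. Then at time $t = \pi/4$, for every vertex $a \in \mathbb{Z}_2^n$ one has $|\psi_{\pi/4}(a)|^2 = 2^{-n+1}$ if $a \cdot \eta = 0$ and $|\psi_{\pi/4}(a)|^2 = 0$ if $a \cdot \eta = 1$; i.e. the distribution is uniform on the half of the vertices orthogonal to $\eta$ and zero on the other half. -/

import Mathlib

open Matrix Complex Finset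

/-- Hamming weight of a vector in `(ZMod 2)^n`. -/
def wt {n : ℕ} (x : Fin n → ZMod 2) : ℕ := (Finset.univ.filter fun i => x i = 1).card

/-- Inner product modulo 2. -/
def dot {n : ℕ} (a x : Fin n → ZMod 2) : ZMod 2 := ∑ i, a i * x i

/-- Adjacency matrix of the augmented hypercube `Q_n^η`:
`A[x,y] = 1` iff `x ⊕ y` is a standard unit vector or equals `η`. -/
def adjQeta {n : ℕ} (η : Fin n → ZMod 2) :
    Matrix (Fin n → ZMod 2) (Fin n → ZMod 2) ℂ :=
  Matrix.of fun x y =>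
    if (∃ j : Fin n, x + y = Pi.single j 1) ∨ x + y = η then 1 else 0

/-- Continuous-time quantum walk `ψ_t = exp(-itA) ψ₀`. -/
noncomputable def walk {V : Type*} [Fintype V] [DecidableEq V]
    (A : Matrix V V ℂ) (ψ0 : V → ℂ) (t : ℝ) : V → ℂ :=
  ((NormedSpace.expSeries ℂ (Matrix V V ℂ)).sum ((-(t : ℂ) * Complex.I) • A)).mulVec ψ0

/-!
Translations `x ↦ x + v` of `(ZMod 2)ⁿ` are simultaneously diagonalised by the Hadamard matrix
`((-1)^(x·y))`, and `adjQeta η` is the sum of the translations by `e_1, …, e_n, η`. So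
`ψ_t(a)` is the inverse Fourier transform of `b ↦ exp(-it λ_b)`, where
`λ_b = ∑ⱼ (-1)^(b_j) + (-1)^(b·η)`.
At `t = π/4` each factor `exp(∓iπ/4) = (1 ∓ i)/√2` is affine in the sign, so the transform
factorises over the coordinates and `ψ(a) = 2^(-(n+1)/2) ((-i)^|a| - i (-i)^|a+η|)`. Finally
`(-i)^|a+η| = (-i)^|a| (-i)^|η| (-1)^(a·η)` and `(-i)^|η| = i` when `|η| ≡ 3 (mod 4)`, so
`ψ(a) = 2^(-(n+1)/2) (-i)^|a| (1 + (-1)^(a·η))`.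
-/

theorem walk_eq_of_mul_eq_mul_diagonal {V : Type*} [Fintype V] [DecidableEq V]
    {A U : Matrix V V ℂ} {d : V → ℂ} (hU : IsUnit U) (hAU : A * U = U * diagonal d)
    (ψ0 : V → ℂ) (t : ℝ) :
    walk A ψ0 t = (U * diagonal (fun v => exp (-(t : ℂ) * I * d v)) * U⁻¹) *ᵥ ψ0 := by
  have hA : A = U * diagonal d * U⁻¹ := by
    rw [← hAU, Matrix.mul_assoc, mul_nonsing_inv _ ((isUnit_iff_isUnit_det U).mp hU),
      Matrix.mul_one]
  rw [walk, ← NormedSpace.exp_eq_expSeries_sum, hA, ← Matrix.smul_mul, ← Matrix.mul_smul,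
    ← diagonal_smul, Matrix.exp_conj _ _ hU, exp_diagonal]
  congr 4
  ext v
  rw [Pi.coe_exp, Pi.smul_apply, smul_eq_mul, Complex.exp_eq_exp_ℂ]

theorem ZMod.eq_zero_or_eq_one (s : ZMod 2) : s = 0 ∨ s = 1 := by
  revert s
  decide

theorem ZMod.sum_univ_two {M : Type*} [AddCommMonoid M] (f : ZMod 2 → M) :
    ∑ s, f s = f 0 + f 1 :=
  Fin.sum_univ_two f

namespace BooleanCube

variable {n : ℕ}

theorem neg_eq_self (x : Fin n → ZMod 2) : -x = x :=
  funext fun i => ZMod.neg_eq_self_mod_two (x i)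

theorem add_eq_iff_eq_add (x y v : Fin n → ZMod 2) : x + y = v ↔ y = x + v := by
  rw [add_comm x v, ← neg_eq_self x, ← sub_eq_add_neg, eq_sub_iff_add_eq', neg_eq_self]

theorem single_one_injective :
    Function.Injective fun j : Fin n => (Pi.single j 1 : Fin n → ZMod 2) := by
  intro i j hij
  by_contra hne
  simpa [Pi.single_eq_of_ne hne] using congrFun hij i

theorem wt_single (j : Fin n) : wt (Pi.single j 1 : Fin n → ZMod 2) = 1 := by
  rw [wt, Finset.card_eq_one]
  exact ⟨j, by ext i; simp [Pi.single_apply]⟩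

theorem dot_comm (a b : Fin n → ZMod 2) : dot a b = dot b a := by
  simp only [dot, mul_comm]

theorem dot_add_left (a b x : Fin n → ZMod 2) : dot (a + b) x = dot a x + dot b x := by
  simp only [dot, Pi.add_apply, add_mul, Finset.sum_add_distrib]

theorem dot_zero_right (a : Fin n → ZMod 2) : dot a 0 = 0 := by
  simp [dot]

theorem dot_single_left (j : Fin n) (b : Fin n → ZMod 2) : dot (Pi.single j 1) b = b j := by
  rw [dot, Finset.sum_eq_single j] <;> simp_all

def signChar (s : ZMod 2) : ℂ := if s = 0 then 1 else -1

@[simp] theorem signChar_zero : signChar 0 = 1 := if_pos rfl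

@[simp] theorem signChar_one : signChar 1 = -1 := if_neg one_ne_zero

theorem signChar_add (s t : ZMod 2) : signChar (s + t) = signChar s * signChar t := by
  rcases s.eq_zero_or_eq_one with rfl | rfl <;> rcases t.eq_zero_or_eq_one with rfl | rfl <;>
    simp [show (1 + 1 : ZMod 2) = 0 from rfl]

theorem signChar_sum {ι : Type*} (s : Finset ι) (f : ι → ZMod 2) :
    signChar (∑ i ∈ s, f i) = ∏ i ∈ s, signChar (f i) := by
  classical
  induction s using Finset.induction_on with
  | empty => simp
  | insert i s hi ih => rw [Finset.sum_insert hi, Finset.prod_insert hi, signChar_add, ih]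

theorem signChar_dot_add_left (a b x : Fin n → ZMod 2) :
    signChar (dot (a + b) x) = signChar (dot a x) * signChar (dot b x) := by
  rw [dot_add_left, signChar_add]

theorem sum_signChar_dot_mul_prod (a : Fin n → ZMod 2) (h : ZMod 2 → ℂ) :
    ∑ b : Fin n → ZMod 2, signChar (dot a b) * ∏ j, h (b j) =
      ∏ j, (h 0 + signChar (a j) * h 1) := by
  have hfactor : ∀ j, h 0 + signChar (a j) * h 1 = ∑ s : ZMod 2, signChar (a j * s) * h s := by
    intro j
    rw [ZMod.sum_univ_two]
    simp
  simp_rw [hfactor, Fintype.prod_sum, dot, signChar_sum, ← Finset.prod_mul_distrib]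

theorem sum_signChar_dot (a : Fin n → ZMod 2) :
    ∑ b : Fin n → ZMod 2, signChar (dot a b) = if a = 0 then 2 ^ n else 0 := by
  have h := sum_signChar_dot_mul_prod a 1
  simp only [Pi.one_apply, Finset.prod_const_one, mul_one] at h
  rw [h]
  split_ifs with ha
  · simp [ha, Finset.prod_const, one_add_one_eq_two]
  · obtain ⟨j, hj⟩ := Function.ne_iff.mp ha
    apply Finset.prod_eq_zero (Finset.mem_univ j)
    rw [(a j).eq_zero_or_eq_one.resolve_left hj, signChar_one, add_neg_cancel]

def hadamard (n : ℕ) : Matrix (Fin n → ZMod 2) (Fin n → ZMod 2) ℂ :=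
  of fun x y => signChar (dot x y)

def translation (v : Fin n → ZMod 2) : Matrix (Fin n → ZMod 2) (Fin n → ZMod 2) ℂ :=
  of fun x y => if x + y = v then 1 else 0

theorem hadamard_mul_hadamard : hadamard n * hadamard n = (2 ^ n : ℂ) • 1 := by
  ext x y
  have hxy : x + y = 0 ↔ x = y := by rw [add_eq_iff_eq_add, add_zero, eq_comm]
  simp only [hadamard, mul_apply, of_apply, dot_comm _ y, ← signChar_dot_add_left,
    sum_signChar_dot, Matrix.smul_apply, one_apply, hxy, smul_eq_mul, mul_ite, mul_one, mul_zero]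

theorem inv_smul_hadamard_mul_hadamard : ((2 ^ n : ℂ)⁻¹ • hadamard n) * hadamard n = 1 := by
  rw [Matrix.smul_mul, hadamard_mul_hadamard, smul_smul, inv_mul_cancel₀ (by simp), one_smul]

theorem hadamard_inv : (hadamard n)⁻¹ = (2 ^ n : ℂ)⁻¹ • hadamard n :=
  inv_eq_left_inv inv_smul_hadamard_mul_hadamard

theorem isUnit_hadamard : IsUnit (hadamard n) :=
  (isUnit_iff_isUnit_det _).mpr (isUnit_det_of_left_inverse inv_smul_hadamard_mul_hadamard)

theorem translation_mul_hadamard (v : Fin n → ZMod 2) :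
    translation v * hadamard n = hadamard n * diagonal fun b => signChar (dot v b) := by
  ext x b
  rw [mul_diagonal]
  simp only [translation, hadamard, mul_apply, of_apply, add_eq_iff_eq_add, ite_mul, one_mul,
    zero_mul, Finset.sum_ite_eq', Finset.mem_univ, if_true, signChar_dot_add_left]

theorem sum_translation_mul_hadamard (S : Finset (Fin n → ZMod 2)) :
    (∑ s ∈ S, translation s) * hadamard n =
      hadamard n * diagonal fun b => ∑ s ∈ S, signChar (dot s b) := by
  rw [Finset.sum_mul, Finset.sum_congr rfl fun s _ => translation_mul_hadamard s,
    ← Finset.mul_sum]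
  congr 1
  ext x y
  simp only [Matrix.sum_apply, diagonal_apply]
  split_ifs <;> simp

theorem walk_sum_translation_single_zero (S : Finset (Fin n → ZMod 2)) (t : ℝ)
    (a : Fin n → ZMod 2) :
    walk (∑ s ∈ S, translation s) (Pi.single 0 1) t a =
      (2 ^ n)⁻¹ *
        ∑ b, signChar (dot a b) * exp (-(t : ℂ) * I * ∑ s ∈ S, signChar (dot s b)) := by
  rw [walk_eq_of_mul_eq_mul_diagonal isUnit_hadamard (sum_translation_mul_hadamard S),
    mulVec_single, hadamard_inv, Matrix.mul_smul]
  simp only [MulOpposite.op_one, one_smul, col_apply, Matrix.smul_apply, smul_eq_mul]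
  rw [mul_apply]
  simp only [mul_diagonal, hadamard, of_apply, dot_zero_right, signChar_zero, mul_one]

/-- As a `Finset` this counts a generator `η = e_j` only once, matching the 0/1 entries of
`adjQeta η`. -/
def augmentedGenerators (η : Fin n → ZMod 2) : Finset (Fin n → ZMod 2) :=
  insert η (univ.image fun j => Pi.single j 1)

theorem adjQeta_eq_sum_translation (η : Fin n → ZMod 2) :
    adjQeta η = ∑ s ∈ augmentedGenerators η, translation s := by
  ext x y
  simp only [adjQeta, translation, of_apply, Matrix.sum_apply, Finset.sum_ite_eq,
    augmentedGenerators, mem_insert, mem_image, mem_univ, true_and]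
  simp only [eq_comm (b := x + y), or_comm]

theorem sum_signChar_dot_augmentedGenerators {η : Fin n → ZMod 2}
    (hη : ∀ j, η ≠ Pi.single j 1) (b : Fin n → ZMod 2) :
    ∑ s ∈ augmentedGenerators η, signChar (dot s b) =
      ∑ j, signChar (b j) + signChar (dot η b) := by
  rw [augmentedGenerators, sum_insert (by simpa [eq_comm] using hη),
    sum_image single_one_injective.injOn, add_comm]
  simp only [dot_single_left]

theorem walk_adjQeta {η : Fin n → ZMod 2} (hη : ∀ j, η ≠ Pi.single j 1) (t : ℝ)
    (a : Fin n → ZMod 2) :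
    walk (adjQeta η) (Pi.single 0 1) t a =
      (2 ^ n)⁻¹ * ∑ b, signChar (dot a b) *
        exp (-(t : ℂ) * I * (∑ j, signChar (b j) + signChar (dot η b))) := by
  simp only [adjQeta_eq_sum_translation, walk_sum_translation_single_zero,
    sum_signChar_dot_augmentedGenerators hη]

theorem exp_neg_pi_div_four_mul_I_mul_signChar (s : ZMod 2) :
    exp (-((Real.pi / 4 : ℝ) : ℂ) * I * signChar s) =
      ((√2 / 2 : ℝ) : ℂ) * (1 - I * signChar s) := by
  rcases s.eq_zero_or_eq_one with rfl | rfl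
  · rw [signChar_zero, mul_one, ← ofReal_neg, exp_mul_I, ← ofReal_cos, ← ofReal_sin,
      Real.cos_neg, Real.sin_neg, Real.cos_pi_div_four, Real.sin_pi_div_four]
    push_cast
    ring
  · rw [signChar_one, neg_mul, mul_neg_one, neg_neg, exp_mul_I, ← ofReal_cos, ← ofReal_sin,
      Real.cos_pi_div_four, Real.sin_pi_div_four]
    push_cast
    ring

def phase (a : Fin n → ZMod 2) : ℂ := ∏ j, if a j = 1 then -I else 1

theorem phase_eq_pow_wt (a : Fin n → ZMod 2) : phase a = (-I) ^ wt a := by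
  rw [phase, prod_ite, prod_const_one, mul_one, prod_const, wt]

theorem norm_phase (a : Fin n → ZMod 2) : ‖phase a‖ = 1 := by
  rw [phase_eq_pow_wt, norm_pow, norm_neg, norm_I, one_pow]

theorem phase_add (a b : Fin n → ZMod 2) :
    phase (a + b) = phase a * phase b * signChar (dot a b) := by
  simp only [phase, dot, signChar_sum, ← prod_mul_distrib, Pi.add_apply]
  refine prod_congr rfl fun j _ => ?_
  rcases (a j).eq_zero_or_eq_one with h | h <;> rcases (b j).eq_zero_or_eq_one with h' | h' <;>
    simp [h, h', show (1 + 1 : ZMod 2) = 0 from rfl]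

theorem phase_eq_I_of_wt_mod_four {η : Fin n → ZMod 2} (hη : wt η % 4 = 3) : phase η = I := by
  rw [phase_eq_pow_wt, ← Nat.div_add_mod (wt η) 4, hη, pow_add, pow_mul]
  norm_num [pow_succ]

theorem sum_signChar_dot_mul_prod_exp_pi_div_four (a : Fin n → ZMod 2) :
    ∑ b : Fin n → ZMod 2,
        signChar (dot a b) * ∏ j, exp (-((Real.pi / 4 : ℝ) : ℂ) * I * signChar (b j)) =
      (√2 : ℂ) ^ n * phase a := by
  set h : ZMod 2 → ℂ := fun s => exp (-((Real.pi / 4 : ℝ) : ℂ) * I * signChar s)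
  have hcoord : ∀ s : ZMod 2, h 0 + signChar s * h 1 = √2 * if s = 1 then -I else 1 := by
    intro s
    simp only [h, exp_neg_pi_div_four_mul_I_mul_signChar]
    rcases s.eq_zero_or_eq_one with rfl | rfl <;>
    · simp
      ring
  rw [sum_signChar_dot_mul_prod a h, phase]
  simp only [hcoord, prod_mul_distrib, prod_const, card_univ, Fintype.card_fin]

theorem walk_adjQeta_pi_div_four {η : Fin n → ZMod 2} (hη : ∀ j, η ≠ Pi.single j 1)
    (a : Fin n → ZMod 2) :
    walk (adjQeta η) (Pi.single 0 1) (Real.pi / 4) a =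
      ((√2 / 2 : ℝ) : ℂ) ^ (n + 1) * (phase a - I * phase (a + η)) := by
  set P : (Fin n → ZMod 2) → ℂ :=
    fun b => ∏ j, exp (-((Real.pi / 4 : ℝ) : ℂ) * I * signChar (b j))
  have hterm : ∀ b : Fin n → ZMod 2,
      signChar (dot a b) *
          exp (-((Real.pi / 4 : ℝ) : ℂ) * I * (∑ j, signChar (b j) + signChar (dot η b))) =
        ((√2 / 2 : ℝ) : ℂ) *
          (signChar (dot a b) * P b - I * (signChar (dot (a + η) b) * P b)) := by
    intro b
    rw [mul_add, exp_add, mul_sum, exp_sum, exp_neg_pi_div_four_mul_I_mul_signChar,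
      signChar_dot_add_left, dot_comm η b]
    ring
  rw [walk_adjQeta hη, sum_congr rfl fun b _ => hterm b, ← mul_sum, sum_sub_distrib, ← mul_sum,
    sum_signChar_dot_mul_prod_exp_pi_div_four, sum_signChar_dot_mul_prod_exp_pi_div_four]
  push_cast
  rw [pow_succ, div_pow]
  field_simp

theorem walk_adjQeta_pi_div_four_of_wt_mod_four {η : Fin n → ZMod 2} (hη : wt η % 4 = 3)
    (a : Fin n → ZMod 2) :
    walk (adjQeta η) (Pi.single 0 1) (Real.pi / 4) a =
      ((√2 / 2 : ℝ) : ℂ) ^ (n + 1) * phase a * (1 + signChar (dot a η)) := by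
  have hη_ne_single : ∀ j, η ≠ Pi.single j 1 := fun j h => by simp [h, wt_single] at hη
  rw [walk_adjQeta_pi_div_four hη_ne_single, phase_add, phase_eq_I_of_wt_mod_four hη]
  linear_combination (-(((√2 / 2 : ℝ) : ℂ) ^ (n + 1) * phase a * signChar (dot a η))) * I_sq

theorem sq_norm_walk_adjQeta_pi_div_four {η : Fin n → ZMod 2} (hη : wt η % 4 = 3)
    (a : Fin n → ZMod 2) :
    ‖walk (adjQeta η) (Pi.single 0 1) (Real.pi / 4) a‖ ^ 2 =
      ‖1 + signChar (dot a η)‖ ^ 2 / 2 ^ (n + 1) := by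
  have hr : ‖((√2 / 2 : ℝ) : ℂ)‖ ^ 2 = 2⁻¹ := by
    rw [norm_real, Real.norm_of_nonneg (by positivity), div_pow, Real.sq_sqrt zero_le_two]
    norm_num
  rw [walk_adjQeta_pi_div_four_of_wt_mod_four hη, norm_mul, norm_mul, norm_phase, mul_one,
    norm_pow, mul_pow, ← pow_mul, mul_comm _ 2, pow_mul, hr, inv_pow, inv_mul_eq_div]

end BooleanCube

theorem augmented_hypercube_half_mixing_three_mod_four_general (n : ℕ)
    (η : Fin n → ZMod 2) (hη : wt η % 4 = 3) :
    ∀ a : Fin n → ZMod 2,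
      (dot a η = 0 →
        ‖walk (adjQeta η) (Pi.single (0 : Fin n → ZMod 2) 1)
          (Real.pi / 4) a‖ ^ 2 = 1 / 2 ^ (n - 1)) ∧
      (dot a η = 1 →
        ‖walk (adjQeta η) (Pi.single (0 : Fin n → ZMod 2) 1)
          (Real.pi / 4) a‖ ^ 2 = 0) := by
  intro a
  obtain ⟨m, rfl⟩ : ∃ m, n = m + 1 := Nat.exists_eq_succ_of_ne_zero <| by
    rintro rfl
    simp [wt] at hη
  rw [BooleanCube.sq_norm_walk_adjQeta_pi_div_four hη]
  constructor <;> intro h <;> simp only [h, BooleanCube.signChar_zero, BooleanCube.signChar_one]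
  · rw [one_add_one_eq_two, Complex.norm_two, Nat.add_sub_cancel]
    field_simp
    ring
  · simp

/-- If `|η| ≡ 3 (mod 4)`, then at time `π/4` the walk on `Q_n^η` started at
`0_n` is uniform on the half-space `{a : a·η = 0}` and zero on the rest. -/
theorem augmented_hypercube_half_mixing_three_mod_four (n : ℕ) (hn : 2 ≤ n)
    (η : Fin n → ZMod 2) (hη : wt η % 4 = 3) :
    ∀ a : Fin n → ZMod 2,
      (dot a η = 0 →
        ‖walk (adjQeta η) (Pi.single (0 : Fin n → ZMod 2) 1)
          (Real.pi / 4) a‖ ^ 2 = 1 / 2 ^ (n - 1)) ∧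
      (dot a η = 1 →
        ‖walk (adjQeta η) (Pi.single (0 : Fin n → ZMod 2) 1)
          (Real.pi / 4) a‖ ^ 2 = 0) :=
  augmented_hypercube_half_mixing_three_mod_four_general n η hη
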